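/- Let U : ℝ^d → [0,∞] satisfy Assumption 1 and Assumption 2 with O = {U < ∞}. Then for every η ∈ (0,1) there exist constants σ > 0, c > 0 and C ≥ 0 (independent of γ) such that for every γ ∈ (0,1], the function W(q,p) = exp(η(|p|²/2 + U(q) + 2γd · p·∇U(q)/(|∇U(q)|² + σ))) satisfies (L W)(q,p) ≤ −c γ W(q,p) + C γ for all (q,p) ∈ O × ℝ^d. -/

import Mathlib

open MeasureTheory Set Filter
open scoped RealInnerProductSpace ENNReal

noncomputable section

abbrev E (d : ℕ) := EuclideanSpace ℝ (Fin d)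

/-- The Laplacian of a function on Euclidean space, as the trace of its Hessian. -/
def lap {d : ℕ} (f : E d → ℝ) (x : E d) : ℝ :=
  ∑ i, ⟪fderiv ℝ (gradient f) x (EuclideanSpace.single i 1), EuclideanSpace.single i 1⟫

/-- Gradient in the `q` (first) variable. -/
def gradq {d : ℕ} (V : E d × E d → ℝ) (x : E d × E d) : E d :=
  gradient (fun q => V (q, x.2)) x.1

/-- Gradient in the `p` (second) variable. -/
def gradp {d : ℕ} (V : E d × E d → ℝ) (x : E d × E d) : E d :=
  gradient (fun p => V (x.1, p)) x.2

/-- Laplacian in the `p` (second) variable. -/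
def lapp {d : ℕ} (V : E d × E d → ℝ) (x : E d × E d) : ℝ :=
  lap (fun p => V (x.1, p)) x.2

/-- The Langevin generator `L V = p·∇_q V − ∇U(q)·∇_p V − γ p·∇_p V + γ Δ_p V`. -/
def Lgen {d : ℕ} (γ : ℝ) (U : E d → ℝ) (V : E d × E d → ℝ) (x : E d × E d) : ℝ :=
  ⟪x.2, gradq V x⟫ - ⟪gradient U x.1, gradp V x⟫ - γ * ⟪x.2, gradp V x⟫ + γ * lapp V x

/-- Assumption 1 of the paper, for a potential which is finite exactly on the open set `O`. -/
def Assumption1 {d : ℕ} (O : Set (E d)) (U : E d → ℝ) : Prop :=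
  IsOpen O ∧ ContDiffOn ℝ (⊤ : ℕ∞) U O ∧ (∀ q ∈ O, 0 ≤ U q) ∧ IsConnected O ∧
    (∀ k : ℕ, IsCompact (closure {q ∈ O | U q < k})) ∧
    IntegrableOn (fun q => Real.exp (-U q)) O ∧
    (∀ s : ℕ → E d, (∀ n, s n ∈ O) →
      Tendsto (fun n => U (s n)) atTop atTop →
      Tendsto (fun n => ‖gradient U (s n)‖) atTop atTop)

/-- Assumption 2 of the paper: `|∇²U(q) y| ≤ ε|∇U(q)|²|y| + C_ε|y|`. -/
def Assumption2 {d : ℕ} (O : Set (E d)) (U : E d → ℝ) : Prop :=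
  ∀ ε : ℝ, 0 < ε → ∃ Cε : ℝ, 0 ≤ Cε ∧ ∀ q ∈ O, ∀ y : E d,
    ‖fderiv ℝ (gradient U) q y‖ ≤ ε * ‖gradient U q‖ ^ 2 * ‖y‖ + Cε * ‖y‖

variable {d : ℕ}

lemma inner_gradient_eq (f : E d → ℝ) (x v : E d) :
    ⟪gradient f x, v⟫ = fderiv ℝ f x v := by
  rw [gradient, InnerProductSpace.toDual_symm_apply]

lemma inner_gradient_eq' (f : E d → ℝ) (x v : E d) :
    ⟪v, gradient f x⟫ = fderiv ℝ f x v := by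
  rw [real_inner_comm, inner_gradient_eq]

/-- gradient of the quadratic exponent -/
lemma hasGradientAt_quad (η a : ℝ) (m p : E d) :
    HasGradientAt (fun p : E d => η * (‖p‖ ^ 2 / 2 + a + ⟪p, m⟫)) (η • (p + m)) p := by
  rw [hasGradientAt_iff_hasFDerivAt]
  have h1 : HasFDerivAt (fun p : E d => ‖p‖ ^ 2 / 2 + a + ⟪p, m⟫)
      ((InnerProductSpace.toDual ℝ (E d)) (p + m)) p := by
    have hsq : HasFDerivAt (fun p : E d => ⟪p, p⟫)
        ((fderivInnerCLM ℝ (p, p)).comp ((ContinuousLinearMap.id ℝ (E d)).prod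
          (ContinuousLinearMap.id ℝ (E d)))) p :=
      (hasFDerivAt_id p).inner ℝ (hasFDerivAt_id p)
    have hlin : HasFDerivAt (fun p : E d => ⟪p, m⟫)
        ((fderivInnerCLM ℝ (p, m)).comp ((ContinuousLinearMap.id ℝ (E d)).prod
          (0 : E d →L[ℝ] E d))) p :=
      (hasFDerivAt_id p).inner ℝ (hasFDerivAt_const m p)
    have := ((hsq.const_mul ((2:ℝ)⁻¹)).add_const a).add hlin
    convert this using 1
    · rfl
    · rfl
    · rfl
    · funext x
      simp only [Pi.add_apply]
      rw [real_inner_self_eq_norm_sq]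
      ring
    · apply ContinuousLinearMap.ext
      intro y
      simp only [ContinuousLinearMap.add_apply, ContinuousLinearMap.coe_smul',
        Pi.smul_apply, ContinuousLinearMap.coe_comp', Function.comp_apply,
        ContinuousLinearMap.prod_apply, ContinuousLinearMap.coe_id', id_eq,
        ContinuousLinearMap.zero_apply, fderivInnerCLM_apply,
        InnerProductSpace.toDual_apply_apply, inner_add_left, inner_zero_right,
        real_inner_comm y p, real_inner_comm y m, smul_eq_mul]
      ring
  have := h1.const_mul η
  convert this using 1
  · rfl
  apply ContinuousLinearMap.ext
  intro y
  simp only [InnerProductSpace.toDual_apply_apply, inner_smul_left, smul_eq_mul,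
    ContinuousLinearMap.coe_smul', Pi.smul_apply, conj_trivial]

lemma hasGradientAt_expquad (η a : ℝ) (m p : E d) :
    HasGradientAt (fun p : E d => Real.exp (η * (‖p‖ ^ 2 / 2 + a + ⟪p, m⟫)))
      ((η * Real.exp (η * (‖p‖ ^ 2 / 2 + a + ⟪p, m⟫))) • (p + m)) p := by
  have h := (hasGradientAt_quad η a m p).hasFDerivAt
  have he := (Real.hasDerivAt_exp (η * (‖p‖ ^ 2 / 2 + a + ⟪p, m⟫))).comp_hasFDerivAt p h
  rw [hasGradientAt_iff_hasFDerivAt]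
  convert he using 1
  · rfl
  · rfl
  apply ContinuousLinearMap.ext
  intro y
  simp only [InnerProductSpace.toDual_apply_apply, inner_smul_left, smul_eq_mul, conj_trivial,
    ContinuousLinearMap.coe_smul', Pi.smul_apply]
  ring

lemma sum_inner_single_sq (v : E d) :
    ∑ i, ⟪v, EuclideanSpace.single i (1:ℝ)⟫ * ⟪v, EuclideanSpace.single i (1:ℝ)⟫
      = ‖v‖ ^ 2 := by
  rw [← real_inner_self_eq_norm_sq, PiLp.inner_apply]
  apply Finset.sum_congr rfl
  intro i _
  rw [EuclideanSpace.inner_single_right]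
  simp [mul_comm]
  ring

lemma lap_expquad (η a : ℝ) (m p : E d) :
    lap (fun p : E d => Real.exp (η * (‖p‖ ^ 2 / 2 + a + ⟪p, m⟫))) p
      = η * Real.exp (η * (‖p‖ ^ 2 / 2 + a + ⟪p, m⟫)) * (d + η * ‖p + m‖ ^ 2) := by
  set h : E d → ℝ := fun p => η * (‖p‖ ^ 2 / 2 + a + ⟪p, m⟫) with hh
  set c : E d → ℝ := fun p => η * Real.exp (h p) with hc
  have hgrad : gradient (fun p : E d => Real.exp (h p)) = fun p => c p • (p + m) :=
    gradient_eq (fun p => hasGradientAt_expquad η a m p)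
  have hcd : HasFDerivAt c ((η * Real.exp (h p)) •
      (InnerProductSpace.toDual ℝ (E d) (η • (p + m)))) p := by
    have := ((hasGradientAt_quad η a m p).hasFDerivAt.exp).const_mul η
    convert this using 1
    · rfl
    · rfl
    · rfl
    apply ContinuousLinearMap.ext
    intro y
    simp only [ContinuousLinearMap.coe_smul', Pi.smul_apply, smul_eq_mul]
    ring
  have hfd : HasFDerivAt (fun p : E d => c p • (p + m))
      (c p • (ContinuousLinearMap.id ℝ (E d)) +
        ((η * Real.exp (h p)) • (InnerProductSpace.toDual ℝ (E d) (η • (p + m)))).smulRight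
          (p + m)) p := by
    have hid : HasFDerivAt (fun p : E d => p + m) (ContinuousLinearMap.id ℝ (E d)) p :=
      (hasFDerivAt_id p).add_const m
    exact hcd.smul hid
  have hD : fderiv ℝ (gradient (fun p : E d => Real.exp (h p))) p
      = c p • (ContinuousLinearMap.id ℝ (E d)) +
        ((η * Real.exp (h p)) • (InnerProductSpace.toDual ℝ (E d) (η • (p + m)))).smulRight
          (p + m) := by
    rw [hgrad]; exact hfd.fderiv
  show lap (fun p : E d => Real.exp (h p)) p = η * Real.exp (h p) * (↑d + η * ‖p + m‖ ^ 2)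
  rw [lap]
  have hterm : ∀ i : Fin d,
      ⟪fderiv ℝ (gradient (fun p : E d => Real.exp (h p))) p (EuclideanSpace.single i 1),
        EuclideanSpace.single i 1⟫
      = c p * 1 + (η * Real.exp (h p)) * η *
          (⟪p + m, EuclideanSpace.single i (1:ℝ)⟫ * ⟪p + m, EuclideanSpace.single i (1:ℝ)⟫) := by
    intro i
    rw [hD]
    simp only [ContinuousLinearMap.add_apply, ContinuousLinearMap.coe_smul', Pi.smul_apply,
      ContinuousLinearMap.coe_id', id_eq, ContinuousLinearMap.smulRight_apply,
      InnerProductSpace.toDual_apply_apply, inner_add_left, smul_eq_mul]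
    rw [inner_smul_left, inner_smul_left, real_inner_comm (EuclideanSpace.single i (1:ℝ)) (p+m)]
    have : ⟪EuclideanSpace.single i (1:ℝ), EuclideanSpace.single i (1:ℝ)⟫ = (1:ℝ) := by
      rw [real_inner_self_eq_norm_sq]; simp
    rw [inner_smul_left]
    simp only [conj_trivial, smul_eq_mul, inner_add_left] at this ⊢
    rw [this, real_inner_comm (p + m) (EuclideanSpace.single i (1:ℝ))]
    simp only [inner_add_left]
    ring
  rw [Finset.sum_congr rfl (fun i _ => hterm i), Finset.sum_add_distrib, Finset.sum_const,
    ← Finset.mul_sum, sum_inner_single_sq]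
  simp only [Finset.card_univ, Fintype.card_fin, nsmul_eq_mul, mul_one]
  ring

lemma q_dir (U : E d → ℝ) (q p : E d) (η c₀ κ σ : ℝ) (hσ : 0 < σ)
    (hg : HasGradientAt U (gradient U q) q)
    (hH : HasFDerivAt (gradient U) (fderiv ℝ (gradient U) q) q) :
    fderiv ℝ (fun q' : E d => Real.exp (η * (c₀ + U q' +
        κ * (⟪p, gradient U q'⟫ / (‖gradient U q'‖ ^ 2 + σ))))) q p
      = η * Real.exp (η * (c₀ + U q +
          κ * (⟪p, gradient U q⟫ / (‖gradient U q‖ ^ 2 + σ)))) *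
        (⟪gradient U q, p⟫ + κ *
          ((⟪p, fderiv ℝ (gradient U) q p⟫ * (‖gradient U q‖ ^ 2 + σ)
            - ⟪p, gradient U q⟫ * (2 * ⟪gradient U q, fderiv ℝ (gradient U) q p⟫))
              / (‖gradient U q‖ ^ 2 + σ) ^ 2)) := by
  set g := gradient U q with hgdef
  set H := fderiv ℝ (gradient U) q with hHdef
  have hN : HasFDerivAt (fun q' : E d => ⟪p, gradient U q'⟫)
      ((fderivInnerCLM ℝ (p, g)).comp ((0 : E d →L[ℝ] E d).prod H)) q :=
    (hasFDerivAt_const p q).inner ℝ hH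
  have funeq : (fun q' : E d => ‖gradient U q'‖ ^ 2 + σ)
      = fun q' => ⟪gradient U q', gradient U q'⟫ + σ :=
    funext fun q' => by rw [real_inner_self_eq_norm_sq]
  have hD : HasFDerivAt (fun q' : E d => ‖gradient U q'‖ ^ 2 + σ)
      ((fderivInnerCLM ℝ (g, g)).comp (H.prod H)) q := by
    rw [funeq]; exact (hH.inner ℝ hH).add_const σ
  have hDne : ‖gradient U q‖ ^ 2 + σ ≠ 0 := by positivity
  have hinv : HasFDerivAt (fun q' : E d => (‖gradient U q'‖ ^ 2 + σ)⁻¹)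
      ((-((‖g‖ ^ 2 + σ) ^ 2)⁻¹) • ((fderivInnerCLM ℝ (g, g)).comp (H.prod H))) q :=
    (hasDerivAt_inv hDne).comp_hasFDerivAt q hD
  have hquot0 : HasFDerivAt
      (fun q' : E d => ⟪p, gradient U q'⟫ / (‖gradient U q'‖ ^ 2 + σ))
      ((⟪p, g⟫ : ℝ) • ((-((‖g‖ ^ 2 + σ) ^ 2)⁻¹) • ((fderivInnerCLM ℝ (g, g)).comp (H.prod H)))
        + ((‖g‖ ^ 2 + σ)⁻¹ : ℝ) • ((fderivInnerCLM ℝ (p, g)).comp ((0 : E d →L[ℝ] E d).prod H)))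
      q := by
    have : (fun q' : E d => ⟪p, gradient U q'⟫ / (‖gradient U q'‖ ^ 2 + σ))
        = fun q' => ⟪p, gradient U q'⟫ * (‖gradient U q'‖ ^ 2 + σ)⁻¹ :=
      funext fun _ => div_eq_mul_inv _ _
    rw [this]
    exact hN.mul hinv
  have hquot := hquot0.const_mul κ
  have hsum := (hg.hasFDerivAt.const_add c₀).add hquot
  have hexp := (hsum.const_mul η).exp
  erw [hexp.fderiv]
  simp only [ContinuousLinearMap.smul_apply, ContinuousLinearMap.coe_smul', Pi.smul_apply,
    ContinuousLinearMap.add_apply, ContinuousLinearMap.coe_comp', Function.comp_apply,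
    ContinuousLinearMap.prod_apply, ContinuousLinearMap.zero_apply, Pi.add_apply,
    fderivInnerCLM_apply, smul_eq_mul, InnerProductSpace.toDual_apply_apply,
    inner_zero_left, zero_add, add_zero]
  rw [real_inner_comm (H p) g]
  set Ex := Real.exp (η * (c₀ + U q + κ * (⟪p, g⟫ / (‖g‖ ^ 2 + σ)))) with hEx
  field_simp
  ring


set_option maxHeartbeats 2000000 in
lemma Lgen_eq (U : E d → ℝ) (q p : E d) (η γ σ : ℝ) (hσ : 0 < σ)
    (hg : HasGradientAt U (gradient U q) q)
    (hH : HasFDerivAt (gradient U) (fderiv ℝ (gradient U) q) q) :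
    Lgen γ U (fun x => Real.exp (η * (‖x.2‖ ^ 2 / 2 + U x.1 +
        2 * γ * ↑d * (⟪x.2, gradient U x.1⟫ / (‖gradient U x.1‖ ^ 2 + σ))))) (q, p)
    = η * γ * Real.exp (η * (‖p‖ ^ 2 / 2 + U q +
        2 * γ * ↑d * (⟪p, gradient U q⟫ / (‖gradient U q‖ ^ 2 + σ)))) *
      (2 * ↑d * ((⟪p, fderiv ℝ (gradient U) q p⟫ * (‖gradient U q‖ ^ 2 + σ)
            - ⟪p, gradient U q⟫ * (2 * ⟪gradient U q, fderiv ℝ (gradient U) q p⟫))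
              / (‖gradient U q‖ ^ 2 + σ) ^ 2)
        - 2 * ↑d * (‖gradient U q‖ ^ 2 / (‖gradient U q‖ ^ 2 + σ))
        - ‖p‖ ^ 2 - 2 * γ * ↑d * (⟪p, gradient U q⟫ / (‖gradient U q‖ ^ 2 + σ))
        + ↑d + η * ‖p + (2 * γ * ↑d / (‖gradient U q‖ ^ 2 + σ)) • gradient U q‖ ^ 2) := by
  have hsne : ‖gradient U q‖ ^ 2 + σ ≠ 0 := by positivity
  have e1 : (fun p' : E d => Real.exp (η * (‖p'‖ ^ 2 / 2 + U q +
        2 * γ * ↑d * (⟪p', gradient U q⟫ / (‖gradient U q‖ ^ 2 + σ)))))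
      = fun p' : E d => Real.exp (η * (‖p'‖ ^ 2 / 2 + U q +
          ⟪p', (2 * γ * ↑d / (‖gradient U q‖ ^ 2 + σ)) • gradient U q⟫)) := by
    funext p'
    rw [real_inner_smul_right]
    ring_nf
  have hT1 : ⟪p, gradq (fun x => Real.exp (η * (‖x.2‖ ^ 2 / 2 + U x.1 +
      2 * γ * ↑d * (⟪x.2, gradient U x.1⟫ / (‖gradient U x.1‖ ^ 2 + σ))))) (q, p)⟫
      = fderiv ℝ (fun q' : E d => Real.exp (η * (‖p‖ ^ 2 / 2 + U q' +
          2 * γ * ↑d * (⟪p, gradient U q'⟫ / (‖gradient U q'‖ ^ 2 + σ))))) q p := by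
    rw [gradq]
    exact inner_gradient_eq' _ _ _
  have hT1v := q_dir U q p η (‖p‖ ^ 2 / 2) (2 * γ * ↑d) σ hσ hg hH
  have hgradp : gradp (fun x => Real.exp (η * (‖x.2‖ ^ 2 / 2 + U x.1 +
      2 * γ * ↑d * (⟪x.2, gradient U x.1⟫ / (‖gradient U x.1‖ ^ 2 + σ))))) (q, p)
      = (η * Real.exp (η * (‖p‖ ^ 2 / 2 + U q +
          ⟪p, (2 * γ * ↑d / (‖gradient U q‖ ^ 2 + σ)) • gradient U q⟫))) •
        (p + (2 * γ * ↑d / (‖gradient U q‖ ^ 2 + σ)) • gradient U q) := by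
    rw [gradp]
    show gradient (fun p' : E d => Real.exp (η * (‖p'‖ ^ 2 / 2 + U q +
        2 * γ * ↑d * (⟪p', gradient U q⟫ / (‖gradient U q‖ ^ 2 + σ))))) p = _
    rw [e1]
    exact (hasGradientAt_expquad η (U q)
      ((2 * γ * ↑d / (‖gradient U q‖ ^ 2 + σ)) • gradient U q) p).gradient
  have hlapp : lapp (fun x => Real.exp (η * (‖x.2‖ ^ 2 / 2 + U x.1 +
      2 * γ * ↑d * (⟪x.2, gradient U x.1⟫ / (‖gradient U x.1‖ ^ 2 + σ))))) (q, p)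
      = η * Real.exp (η * (‖p‖ ^ 2 / 2 + U q +
          ⟪p, (2 * γ * ↑d / (‖gradient U q‖ ^ 2 + σ)) • gradient U q⟫)) *
        (↑d + η * ‖p + (2 * γ * ↑d / (‖gradient U q‖ ^ 2 + σ)) • gradient U q‖ ^ 2) := by
    rw [lapp]
    show lap (fun p' : E d => Real.exp (η * (‖p'‖ ^ 2 / 2 + U q +
        2 * γ * ↑d * (⟪p', gradient U q⟫ / (‖gradient U q‖ ^ 2 + σ))))) p = _
    rw [e1]
    exact lap_expquad η (U q) ((2 * γ * ↑d / (‖gradient U q‖ ^ 2 + σ)) • gradient U q) p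
  have hexpeq : Real.exp (η * (‖p‖ ^ 2 / 2 + U q +
      ⟪p, (2 * γ * ↑d / (‖gradient U q‖ ^ 2 + σ)) • gradient U q⟫))
      = Real.exp (η * (‖p‖ ^ 2 / 2 + U q +
          2 * γ * ↑d * (⟪p, gradient U q⟫ / (‖gradient U q‖ ^ 2 + σ)))) := by
    rw [real_inner_smul_right]; ring_nf
  rw [Lgen, hT1, hT1v, hgradp, hlapp, hexpeq]
  simp only [inner_add_right, real_inner_smul_right, real_inner_self_eq_norm_sq]
  rw [real_inner_comm (gradient U q) p]
  generalize Real.exp (η * (‖p‖ ^ 2 / 2 + U q +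
    2 * γ * ↑d * (⟪p, gradient U q⟫ / (‖gradient U q‖ ^ 2 + σ)))) = Ex
  generalize ‖p + (2 * γ * ↑d / (‖gradient U q‖ ^ 2 + σ)) • gradient U q‖ ^ 2 = Pm
  generalize (⟪p, fderiv ℝ (gradient U) q p⟫ : ℝ) = a1
  generalize (⟪gradient U q, fderiv ℝ (gradient U) q p⟫ : ℝ) = a3
  generalize (⟪p, gradient U q⟫ : ℝ) = a2
  generalize ‖p‖ ^ 2 = n2
  generalize hG2 : ‖gradient U q‖ ^ 2 = G2 at hsne ⊢
  field_simp
  ring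

lemma smooth_facts {O : Set (E d)} {U : E d → ℝ} (hO : IsOpen O)
    (hU : ContDiffOn ℝ (⊤ : ℕ∞) U O) {q : E d} (hq : q ∈ O) :
    HasGradientAt U (gradient U q) q ∧
      HasFDerivAt (gradient U) (fderiv ℝ (gradient U) q) q := by
  have hUq : ContDiffAt ℝ (⊤ : ℕ∞) U q := hU.contDiffAt (hO.mem_nhds hq)
  have hdiff : DifferentiableAt ℝ U q := hUq.differentiableAt (by simp)
  refine ⟨hdiff.hasGradientAt, ?_⟩
  have hfd : ContDiffAt ℝ 1 (fderiv ℝ U) q := hUq.fderiv_right (by norm_cast)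
  have hgrad : ContDiffAt ℝ 1 (gradient U) q := by
    have : gradient U = fun x =>
        (InnerProductSpace.toDual ℝ (E d)).symm (fderiv ℝ U x) := rfl
    rw [this]
    exact ((InnerProductSpace.toDual ℝ (E d)).symm.contDiff.contDiffAt).comp q hfd
  exact (hgrad.differentiableAt one_ne_zero).hasFDerivAt

lemma bounded_on_small_grad {O : Set (E d)} {U : E d → ℝ}
    (hseq : ∀ s : ℕ → E d, (∀ n, s n ∈ O) →
      Tendsto (fun n => U (s n)) atTop atTop →
      Tendsto (fun n => ‖gradient U (s n)‖) atTop atTop)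
    (R : ℝ) : ∃ M : ℝ, ∀ q ∈ O, ‖gradient U q‖ ^ 2 < R → U q ≤ M := by
  by_contra hcon
  push_neg at hcon
  choose s hsO hsR hsU using fun n : ℕ => hcon n
  have hU : Tendsto (fun n => U (s n)) atTop atTop :=
    tendsto_atTop_mono (fun n => (hsU n).le) tendsto_natCast_atTop_atTop
  have hg := hseq s hsO hU
  have hbd : ∀ n, ‖gradient U (s n)‖ ≤ Real.sqrt R := by
    intro n
    have h1 : ‖gradient U (s n)‖ ^ 2 < R := hsR n
    nlinarith [Real.sq_sqrt (le_of_lt (lt_of_le_of_lt (sq_nonneg ‖gradient U (s n)‖) h1)),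
      Real.sqrt_nonneg R, norm_nonneg (gradient U (s n))]
  obtain ⟨n, hn⟩ := (hg.eventually_gt_atTop (Real.sqrt R)).exists
  exact absurd (hbd n) (not_le.mpr hn)

set_option maxHeartbeats 2000000 in
lemma B_le (η γ σ t ρ ε Cε dd np ng nH a1 a2 a3 Pm : ℝ)
    (hη0 : 0 < η) (hη1 : η < 1) (hγ0 : 0 < γ) (hγ1 : γ ≤ 1)
    (hdd : 1 ≤ dd) (ht : 1 ≤ t) (hσt : σ = t ^ 2)
    (hρ : ρ = (1 - η) / 4) (hε : ε = (1 - η) / (24 * dd))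
    (hσ1 : 6 * dd * Cε / ρ ≤ σ) (hσ2 : 4 * dd * (1 + 9 / (4 * ρ)) ≤ σ)
    (hnp : 0 ≤ np) (hng : 0 ≤ ng) (hnH : 0 ≤ nH) (hCε : 0 ≤ Cε)
    (hH : nH ≤ ε * ng ^ 2 * np + Cε * np)
    (ha1 : |a1| ≤ np * nH) (ha2 : |a2| ≤ np * ng) (ha3 : |a3| ≤ ng * nH)
    (hPm : Pm ≤ np + 2 * γ * dd / (ng ^ 2 + σ) * ng) (hPm0 : 0 ≤ Pm) :
    2 * dd * ((a1 * (ng ^ 2 + σ) - a2 * (2 * a3)) / (ng ^ 2 + σ) ^ 2)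
      - 2 * dd * (ng ^ 2 / (ng ^ 2 + σ)) - np ^ 2
      - 2 * γ * dd * (a2 / (ng ^ 2 + σ)) + dd + η * Pm ^ 2
    ≤ -(2 * dd) * (ng ^ 2 / (ng ^ 2 + σ)) + dd + dd / 4 - ρ * np ^ 2 := by
  have hρ0 : 0 < ρ := by rw [hρ]; linarith
  have ht0 : 0 < t := by linarith
  have hσ0 : (1:ℝ) ≤ σ := by nlinarith
  obtain ⟨s, hs⟩ : ∃ s : ℝ, s = ng ^ 2 + σ := ⟨_, rfl⟩
  rw [← hs] at hPm ⊢
  have hs0 : (0:ℝ) < s := by rw [hs]; positivity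
  have hgs : ng ^ 2 ≤ s := by rw [hs]; linarith
  have hσs : σ ≤ s := by rw [hs]; nlinarith [sq_nonneg ng]
  have hε0 : 0 < ε := by
    rw [hε]; exact div_pos (by linarith) (by linarith)
  -- (1) ng / s ≤ 1 / (2 t)
  have hgst : ng / s ≤ 1 / (2 * t) := by
    rw [div_le_div_iff₀ hs0 (by linarith : (0:ℝ) < 2 * t)]
    nlinarith [sq_nonneg (ng - t)]
  -- (2) the Hessian quotient term
  have hQ : 2 * dd * ((a1 * s - a2 * (2 * a3)) / s ^ 2) ≤ 2 * ρ * np ^ 2 := by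
    have key : a1 * s - a2 * (2 * a3) ≤ 3 * np * nH * s := by
      have k1 : a1 * s ≤ np * nH * s :=
        mul_le_mul_of_nonneg_right ((le_abs_self a1).trans ha1) hs0.le
      have k2 : -(a2 * (2 * a3)) ≤ 2 * (np * ng) * (ng * nH) := by
        have k2a : |a2 * a3| ≤ (np * ng) * (ng * nH) := by
          rw [abs_mul]
          exact mul_le_mul ha2 ha3 (abs_nonneg a3) (by positivity)
        nlinarith [neg_abs_le (a2 * a3)]
      have k3 : 2 * (np * ng) * (ng * nH) ≤ 2 * np * nH * s := by
        nlinarith [mul_nonneg (mul_nonneg hnp hnH) (by linarith : (0:ℝ) ≤ s - ng ^ 2)]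
      linarith
    have h4 : (a1 * s - a2 * (2 * a3)) / s ^ 2 ≤ 3 * np * nH * s / s ^ 2 :=
      (div_le_div_iff_of_pos_right (by positivity)).mpr key
    have h5 : 3 * np * nH * s / s ^ 2 = 3 * np * nH / s := by
      field_simp
    have h6 : 3 * np * nH / s ≤ 3 * np * (ε * ng ^ 2 * np + Cε * np) / s :=
      (div_le_div_iff_of_pos_right hs0).mpr (by nlinarith)
    have h7 : 3 * np * (ε * ng ^ 2 * np + Cε * np) / s
        = 3 * ε * np ^ 2 * (ng ^ 2 / s) + 3 * Cε * np ^ 2 * (1 / s) := by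
      ring
    have h8 : ng ^ 2 / s ≤ 1 := (div_le_one hs0).mpr hgs
    have h9 : 1 / s ≤ 1 / σ := one_div_le_one_div_of_le (by linarith) hσs
    have h10 : (a1 * s - a2 * (2 * a3)) / s ^ 2
        ≤ 3 * ε * np ^ 2 + 3 * Cε * np ^ 2 * (1 / σ) := by
      have r1 : 3 * ε * np ^ 2 * (ng ^ 2 / s) ≤ 3 * ε * np ^ 2 * 1 :=
        mul_le_mul_of_nonneg_left h8 (by positivity)
      have r2 : 3 * Cε * np ^ 2 * (1 / s) ≤ 3 * Cε * np ^ 2 * (1 / σ) :=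
        mul_le_mul_of_nonneg_left h9 (by positivity)
      calc (a1 * s - a2 * (2 * a3)) / s ^ 2 ≤ 3 * np * nH * s / s ^ 2 := h4
        _ = 3 * np * nH / s := h5
        _ ≤ 3 * np * (ε * ng ^ 2 * np + Cε * np) / s := h6
        _ = 3 * ε * np ^ 2 * (ng ^ 2 / s) + 3 * Cε * np ^ 2 * (1 / s) := h7
        _ ≤ 3 * ε * np ^ 2 + 3 * Cε * np ^ 2 * (1 / σ) := by linarith
    have hε6 : 6 * dd * ε = ρ := by
      rw [hε, hρ]
      field_simp
      ring
    have hC6 : 6 * dd * Cε / σ ≤ ρ := by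
      rw [div_le_iff₀ (by linarith : (0:ℝ) < σ)]
      rw [div_le_iff₀ hρ0] at hσ1
      nlinarith
    have := mul_le_mul_of_nonneg_left h10 (by positivity : (0:ℝ) ≤ 2 * dd)
    calc 2 * dd * ((a1 * s - a2 * (2 * a3)) / s ^ 2)
        ≤ 2 * dd * (3 * ε * np ^ 2 + 3 * Cε * np ^ 2 * (1 / σ)) := this
      _ = (6 * dd * ε) * np ^ 2 + (6 * dd * Cε / σ) * np ^ 2 := by ring
      _ ≤ ρ * np ^ 2 + ρ * np ^ 2 := by
          have := mul_le_mul_of_nonneg_right hC6 (sq_nonneg np)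
          rw [hε6]
          linarith
      _ = 2 * ρ * np ^ 2 := by ring
  -- (3) the transport term
  have hT : -(2 * γ * dd * (a2 / s)) ≤ dd * np / t := by
    have k0 : -a2 ≤ np * ng := by nlinarith [neg_abs_le a2]
    have k1 : (-a2) / s ≤ np * ng / s := (div_le_div_iff_of_pos_right hs0).mpr k0
    have k3 : 2 * γ * dd * ((-a2) / s) ≤ 2 * γ * dd * (np * ng / s) :=
      mul_le_mul_of_nonneg_left k1 (by positivity)
    have k4 : 2 * γ * dd * (np * ng / s) ≤ 2 * 1 * dd * (np * ng / s) := by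
      have hpos : (0:ℝ) ≤ np * ng / s := by positivity
      nlinarith [mul_nonneg (by linarith : (0:ℝ) ≤ 1 - γ)
        (mul_nonneg (by linarith : (0:ℝ) ≤ 2 * dd) hpos)]
    have k5 : np * (ng / s) ≤ np * (1 / (2 * t)) := mul_le_mul_of_nonneg_left hgst hnp
    have k6 : 2 * 1 * dd * (np * ng / s) = 2 * dd * (np * (ng / s)) := by ring
    have k7 : 2 * dd * (np * (ng / s)) ≤ 2 * dd * (np * (1 / (2 * t))) :=
      mul_le_mul_of_nonneg_left k5 (by positivity)
    have k8 : 2 * dd * (np * (1 / (2 * t))) = dd * np / t := by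
      field_simp
    calc -(2 * γ * dd * (a2 / s)) = 2 * γ * dd * ((-a2) / s) := by ring
      _ ≤ 2 * γ * dd * (np * ng / s) := k3
      _ ≤ 2 * 1 * dd * (np * ng / s) := k4
      _ = 2 * dd * (np * (ng / s)) := k6
      _ ≤ 2 * dd * (np * (1 / (2 * t))) := k7
      _ = dd * np / t := k8
  -- (4) the norm of m
  have hmn : 2 * γ * dd / s * ng ≤ dd / t := by
    have k1 : 2 * γ * dd / s * ng = 2 * γ * dd * (ng / s) := by ring
    have k2 : 2 * γ * dd * (ng / s) ≤ 2 * γ * dd * (1 / (2 * t)) :=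
      mul_le_mul_of_nonneg_left hgst (by positivity)
    have k3 : 2 * γ * dd * (1 / (2 * t)) = γ * (dd / t) := by
      field_simp
    have k4 : γ * (dd / t) ≤ 1 * (dd / t) :=
      mul_le_mul_of_nonneg_right hγ1 (by positivity)
    rw [k1]
    calc 2 * γ * dd * (ng / s) ≤ 2 * γ * dd * (1 / (2 * t)) := k2
      _ = γ * (dd / t) := k3
      _ ≤ 1 * (dd / t) := k4
      _ = dd / t := by ring
  -- (5) the kinetic square term
  have hPb : Pm ≤ np + dd / t := by
    have := hPm
    have k : 2 * γ * dd / s * ng ≤ dd / t := hmn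
    linarith
  have hη2 : η * Pm ^ 2 ≤ η * np ^ 2 + 2 * np * (dd / t) + (dd / t) ^ 2 := by
    have hsq : Pm ^ 2 ≤ (np + dd / t) ^ 2 := by
      have h0 : (0:ℝ) ≤ dd / t := by positivity
      nlinarith
    have h1 : η * Pm ^ 2 ≤ η * (np + dd / t) ^ 2 :=
      mul_le_mul_of_nonneg_left hsq hη0.le
    have h2 : (0:ℝ) ≤ 2 * np * (dd / t) := by positivity
    have h3 : (0:ℝ) ≤ (dd / t) ^ 2 := by positivity
    nlinarith
  -- (6) AM-GM
  have hAM : 3 * (dd * np / t) ≤ ρ * np ^ 2 + 9 * dd ^ 2 / (4 * ρ * σ) := by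
    rw [hσt, ← sub_nonneg]
    have e2 : ρ * np ^ 2 + 9 * dd ^ 2 / (4 * ρ * t ^ 2) - 3 * (dd * np / t)
        = (2 * ρ * np * t - 3 * dd) ^ 2 / (4 * ρ * t ^ 2) := by
      field_simp
      ring
    rw [e2]
    positivity
  -- (7) the constant term
  have hK : dd ^ 2 / σ + 9 * dd ^ 2 / (4 * ρ * σ) ≤ dd / 4 := by
    have e : dd ^ 2 / σ + 9 * dd ^ 2 / (4 * ρ * σ) = dd ^ 2 * (1 + 9 / (4 * ρ)) / σ := by
      field_simp
    rw [e, div_le_iff₀ (by linarith : (0:ℝ) < σ)]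
    have h1 : dd / 4 * (4 * dd * (1 + 9 / (4 * ρ))) ≤ dd / 4 * σ :=
      mul_le_mul_of_nonneg_left hσ2 (by linarith)
    have h2 : dd / 4 * (4 * dd * (1 + 9 / (4 * ρ))) = dd ^ 2 * (1 + 9 / (4 * ρ)) := by ring
    linarith
  have hdt : (dd / t) ^ 2 = dd ^ 2 / σ := by rw [hσt, div_pow]
  have he1 : 2 * np * (dd / t) + dd * np / t = 3 * (dd * np / t) := by ring
  have hrel : η * np ^ 2 - np ^ 2 + 4 * ρ * np ^ 2 = 0 := by rw [hρ]; ring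
  linarith [hQ, hT, hη2, hAM, hK]

set_option maxHeartbeats 2000000 in
theorem stmt6 {d : ℕ} (O : Set (E d)) (U : E d → ℝ)
    (hA1 : Assumption1 O U) (hA2 : Assumption2 O U) :
    ∀ η ∈ Set.Ioo (0 : ℝ) 1, ∃ σ > (0 : ℝ), ∃ c > (0 : ℝ), ∃ C : ℝ, 0 ≤ C ∧
      ∀ γ : ℝ, 0 < γ → γ ≤ 1 → ∀ q ∈ O, ∀ p : E d,
        Lgen γ U (fun x => Real.exp (η * (‖x.2‖ ^ 2 / 2 + U x.1 +
            2 * γ * d * (⟪x.2, gradient U x.1⟫ / (‖gradient U x.1‖ ^ 2 + σ))))) (q, p) ≤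
          -c * γ * Real.exp (η * (‖p‖ ^ 2 / 2 + U q +
            2 * γ * d * (⟪p, gradient U q⟫ / (‖gradient U q‖ ^ 2 + σ)))) + C * γ := by
  obtain ⟨hO, hUsm, hUnn, hconn, hcpt, hint, hseq⟩ := hA1
  intro η hη
  obtain ⟨hη0, hη1⟩ := hη
  rcases Nat.eq_zero_or_pos d with hd0 | hdpos
  · -- degenerate case d = 0
    subst hd0
    refine ⟨1, one_pos, 1, one_pos, Real.exp (η * U 0), (Real.exp_pos _).le, ?_⟩
    intro γ hγ0 hγ1 q hq p
    haveI hsub : Subsingleton (E 0) := ⟨fun a b => PiLp.ext fun i => Fin.elim0 i⟩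
    have hq0 : q = 0 := Subsingleton.elim q 0
    have hp0 : p = 0 := Subsingleton.elim p 0
    subst hq0; subst hp0
    have hL : Lgen γ U (fun x => Real.exp (η * (‖x.2‖ ^ 2 / 2 + U x.1 +
        2 * γ * (0:ℕ) * (⟪x.2, gradient U x.1⟫ / (‖gradient U x.1‖ ^ 2 + 1))))) (0, 0) = 0 := by
      rw [Lgen]
      have h1 : ∀ v : E 0, v = 0 := fun v => Subsingleton.elim v 0
      rw [h1 (gradq _ _), h1 (gradp _ _), h1 (gradient U (0,(0:E 0)).1)]
      rw [lapp, lap]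
      simp
    rw [hL]
    have harg : η * (‖(0 : E 0)‖ ^ 2 / 2 + U 0 +
        2 * γ * (0:ℕ) * (⟪(0 : E 0), gradient U 0⟫ / (‖gradient U 0‖ ^ 2 + 1))) = η * U 0 := by
      simp
    rw [harg]
    have := Real.exp_pos (η * U 0)
    nlinarith
  · -- main case d ≥ 1
    have hdd : (1:ℝ) ≤ (d:ℝ) := by exact_mod_cast hdpos
    obtain ⟨ρ, hρ⟩ : ∃ ρ : ℝ, ρ = (1 - η) / 4 := ⟨_, rfl⟩
    have hρ0 : 0 < ρ := by rw [hρ]; linarith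
    obtain ⟨ε, hε⟩ : ∃ ε : ℝ, ε = (1 - η) / (24 * (d:ℝ)) := ⟨_, rfl⟩
    have hε0 : 0 < ε := by rw [hε]; exact div_pos (by linarith) (by linarith)
    obtain ⟨Cε, hCε0, hCεb⟩ := hA2 ε hε0
    obtain ⟨σ, hσdef⟩ : ∃ σ : ℝ,
        σ = max 1 (max (6 * (d:ℝ) * Cε / ρ) (4 * (d:ℝ) * (1 + 9 / (4 * ρ)))) := ⟨_, rfl⟩
    have hσ1 : (1:ℝ) ≤ σ := by rw [hσdef]; exact le_max_left _ _
    have hσ0 : (0:ℝ) < σ := by linarith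
    have hσa : 6 * (d:ℝ) * Cε / ρ ≤ σ := by
      rw [hσdef]; exact le_trans (le_max_left _ _) (le_max_right _ _)
    have hσb : 4 * (d:ℝ) * (1 + 9 / (4 * ρ)) ≤ σ := by
      rw [hσdef]; exact le_trans (le_max_right _ _) (le_max_right _ _)
    obtain ⟨t, htdef⟩ : ∃ t : ℝ, t = Real.sqrt σ := ⟨_, rfl⟩
    have ht1 : 1 ≤ t := by
      rw [htdef]; exact Real.le_sqrt_of_sq_le (by nlinarith)
    have hσt : σ = t ^ 2 := by rw [htdef, Real.sq_sqrt hσ0.le]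
    obtain ⟨M, hM⟩ := bounded_on_small_grad hseq (7 * σ)
    obtain ⟨T2, hT2⟩ : ∃ x : ℝ, x = 7 * (d:ℝ) / (4 * ρ) := ⟨_, rfl⟩
    have hT20 : 0 < T2 := by rw [hT2]; positivity
    obtain ⟨c, hc⟩ : ∃ x : ℝ, x = η * (d:ℝ) / 2 := ⟨_, rfl⟩
    have hc0 : 0 < c := by rw [hc]; positivity
    obtain ⟨C, hC⟩ : ∃ x : ℝ,
        x = η * (7 * (d:ℝ) / 4) * Real.exp (η * (T2 / 2 + M + (d:ℝ) * Real.sqrt T2)) := ⟨_, rfl⟩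
    have hC0 : 0 ≤ C := by rw [hC]; positivity
    refine ⟨σ, hσ0, c, hc0, C, hC0, ?_⟩
    intro γ hγ0 hγ1 q hq p
    obtain ⟨hgrad, hHder⟩ := smooth_facts hO hUsm hq
    rw [Lgen_eq U q p η γ σ hσ0 hgrad hHder]
    set g : E d := gradient U q with hgdef
    set Hp : E d := fderiv ℝ (gradient U) q p with hHpdef
    have hs0 : (0:ℝ) < ‖g‖ ^ 2 + σ := by positivity
    have hA2q : ‖Hp‖ ≤ ε * ‖g‖ ^ 2 * ‖p‖ + Cε * ‖p‖ := hCεb q hq p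
    have hPm : ‖p + (2 * γ * ↑d / (‖g‖ ^ 2 + σ)) • g‖
        ≤ ‖p‖ + 2 * γ * ↑d / (‖g‖ ^ 2 + σ) * ‖g‖ := by
      refine (norm_add_le _ _).trans ?_
      rw [norm_smul, Real.norm_eq_abs, abs_of_nonneg (by positivity)]
    have hB := B_le η γ σ t ρ ε Cε (d:ℝ) ‖p‖ ‖g‖ ‖Hp‖ ⟪p, Hp⟫ ⟪p, g⟫ ⟪g, Hp⟫
      ‖p + (2 * γ * ↑d / (‖g‖ ^ 2 + σ)) • g‖ hη0 hη1 hγ0 hγ1 hdd ht1 hσt hρ hε hσa hσb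
      (norm_nonneg p) (norm_nonneg g) (norm_nonneg Hp) hCε0 hA2q
      (abs_real_inner_le_norm p Hp) (abs_real_inner_le_norm p g) (abs_real_inner_le_norm g Hp)
      hPm (norm_nonneg _)
    set B : ℝ := 2 * ↑d * ((⟪p, Hp⟫ * (‖g‖ ^ 2 + σ) - ⟪p, g⟫ * (2 * ⟪g, Hp⟫))
        / (‖g‖ ^ 2 + σ) ^ 2)
      - 2 * ↑d * (‖g‖ ^ 2 / (‖g‖ ^ 2 + σ)) - ‖p‖ ^ 2
      - 2 * γ * ↑d * (⟪p, g⟫ / (‖g‖ ^ 2 + σ)) + ↑d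
      + η * ‖p + (2 * γ * ↑d / (‖g‖ ^ 2 + σ)) • g‖ ^ 2 with hBdef
    set W : ℝ := Real.exp (η * (‖p‖ ^ 2 / 2 + U q
      + 2 * γ * ↑d * (⟪p, g⟫ / (‖g‖ ^ 2 + σ)))) with hWdef
    have hW0 : 0 < W := Real.exp_pos _
    have hXnn : 0 ≤ ‖g‖ ^ 2 / (‖g‖ ^ 2 + σ) := by positivity
    by_cases hreg : 7 * σ ≤ ‖g‖ ^ 2
    · -- region I : gradient large
      have hfrac : 7 / 8 ≤ ‖g‖ ^ 2 / (‖g‖ ^ 2 + σ) := by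
        rw [le_div_iff₀ hs0]
        linarith
      have hmul : (2 * (d:ℝ)) * (7 / 8) ≤ (2 * (d:ℝ)) * (‖g‖ ^ 2 / (‖g‖ ^ 2 + σ)) :=
        mul_le_mul_of_nonneg_left hfrac (by positivity)
      have hB2 : B ≤ -(↑d) / 2 := by
        have := mul_nonneg hρ0.le (sq_nonneg ‖p‖)
        linarith [hB]
      have step : η * γ * W * B ≤ η * γ * W * (-(↑d) / 2) :=
        mul_le_mul_of_nonneg_left hB2 (by positivity)
      have hCγ : 0 ≤ C * γ := mul_nonneg hC0 hγ0.le
      have heq : η * γ * W * (-(↑d) / 2) = -c * γ * W := by rw [hc]; ring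
      calc η * γ * W * B ≤ η * γ * W * (-(↑d) / 2) := step
        _ = -c * γ * W := heq
        _ ≤ -c * γ * W + C * γ := le_add_of_nonneg_right hCγ
    · -- region II : gradient small
      push_neg at hreg
      have hUM : U q ≤ M := hM q hq hreg
      have hB2 : B ≤ 5 * ↑d / 4 - ρ * ‖p‖ ^ 2 := by
        have h1 : (0:ℝ) ≤ (2 * ↑d) * (‖g‖ ^ 2 / (‖g‖ ^ 2 + σ)) := by positivity
        linarith [hB]
      have key : (η * B + c) * W ≤ C := by
        rcases le_or_gt (η * B + c) 0 with hneg | hposs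
        · have h1 : 0 ≤ (-(η * B + c)) * W := mul_nonneg (by linarith) hW0.le
          nlinarith
        · have hp2 : ‖p‖ ^ 2 < T2 := by
            rw [hT2]
            rw [hc] at hposs
            have hb5 : η * B ≤ η * (5 * ↑d / 4 - ρ * ‖p‖ ^ 2) :=
              mul_le_mul_of_nonneg_left hB2 hη0.le
            rw [lt_div_iff₀ (by positivity : (0:ℝ) < 4 * ρ)]
            nlinarith
          have hpT : ‖p‖ ≤ Real.sqrt T2 := Real.le_sqrt_of_sq_le hp2.le
          have hT2nn : 0 ≤ Real.sqrt T2 := Real.sqrt_nonneg _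
          have hgs2 : ‖g‖ / (‖g‖ ^ 2 + σ) ≤ 1 / 2 := by
            rw [div_le_iff₀ hs0]
            nlinarith [sq_nonneg (‖g‖ - 1)]
          have hterm3 : 2 * γ * ↑d * (⟪p, g⟫ / (‖g‖ ^ 2 + σ)) ≤ ↑d * Real.sqrt T2 := by
            have i1 : (⟪p, g⟫ : ℝ) / (‖g‖ ^ 2 + σ) ≤ ‖p‖ * ‖g‖ / (‖g‖ ^ 2 + σ) :=
              (div_le_div_iff_of_pos_right hs0).mpr (real_inner_le_norm p g)
            have i2 : ‖p‖ * ‖g‖ / (‖g‖ ^ 2 + σ) = ‖p‖ * (‖g‖ / (‖g‖ ^ 2 + σ)) := by ring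
            have i3 : ‖p‖ * (‖g‖ / (‖g‖ ^ 2 + σ)) ≤ ‖p‖ * (1 / 2) :=
              mul_le_mul_of_nonneg_left hgs2 (norm_nonneg p)
            have i4 : 2 * γ * ↑d * (⟪p, g⟫ / (‖g‖ ^ 2 + σ)) ≤ 2 * γ * ↑d * (‖p‖ * (1 / 2)) := by
              refine mul_le_mul_of_nonneg_left ?_ (by positivity)
              calc (⟪p, g⟫ : ℝ) / (‖g‖ ^ 2 + σ) ≤ ‖p‖ * ‖g‖ / (‖g‖ ^ 2 + σ) := i1
                _ = ‖p‖ * (‖g‖ / (‖g‖ ^ 2 + σ)) := i2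
                _ ≤ ‖p‖ * (1 / 2) := i3
            have i5 : 2 * γ * ↑d * (‖p‖ * (1 / 2)) = γ * (↑d * ‖p‖) := by ring
            have i6 : γ * (↑d * ‖p‖) ≤ 1 * (↑d * ‖p‖) :=
              mul_le_mul_of_nonneg_right hγ1 (by positivity)
            have i7 : (↑d : ℝ) * ‖p‖ ≤ ↑d * Real.sqrt T2 :=
              mul_le_mul_of_nonneg_left hpT (by positivity)
            linarith
          have hF : η * (‖p‖ ^ 2 / 2 + U q + 2 * γ * ↑d * (⟪p, g⟫ / (‖g‖ ^ 2 + σ)))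
              ≤ η * (T2 / 2 + M + ↑d * Real.sqrt T2) := by
            refine mul_le_mul_of_nonneg_left ?_ hη0.le
            have : ‖p‖ ^ 2 / 2 ≤ T2 / 2 := by linarith
            linarith
          have hWle : W ≤ Real.exp (η * (T2 / 2 + M + ↑d * Real.sqrt T2)) := by
            rw [hWdef]
            exact Real.exp_le_exp.mpr hF
          have hcoef : η * B + c ≤ η * (7 * ↑d / 4) := by
            rw [hc]
            have hb5 : η * B ≤ η * (5 * ↑d / 4 - ρ * ‖p‖ ^ 2) :=
              mul_le_mul_of_nonneg_left hB2 hη0.le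
            nlinarith [mul_nonneg (mul_nonneg hη0.le hρ0.le) (sq_nonneg ‖p‖)]
          calc (η * B + c) * W ≤ η * (7 * ↑d / 4) * Real.exp (η * (T2 / 2 + M
              + ↑d * Real.sqrt T2)) :=
              mul_le_mul hcoef hWle hW0.le (by positivity)
            _ = C := by rw [hC]
      have hmulγ := mul_le_mul_of_nonneg_left key hγ0.le
      nlinarith
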